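/- arXiv:2510.14458 — 3 statements merged into one kernel-verified Lean document; each statement's English description precedes it below -/
import Mathlib

section
/- Let {a_k}_{k∈ℤ} with a_k = 0 for k ≤ 0, a_k ∈ S_{α,β} = {z ∈ ℂ : |arg z − α| ≤ β} for k ≥ 1 (for some 0 ≤ α < 2π, 0 ≤ β < π/2), and suppose {a_k}_{k≥1} ∈ GM, i.e., ∑_{k=n}^{2n}|a_k − a_{k+1}| ≤ (C/n)∑_{k=n/λ}^{λn}|a_k| for all n ≥ 1, for some C > 0, λ > 1. Then {a_k}_{k∈ℤ} ∈ GM-bar: for all n ≥ 0, ∑_{⌊2^{n−1}⌋ ≤ |m| < 2^n}|Δa_m| ≤ C' sup_{k≥0} min(1,2^{k−n}) â_{2^k}, where â_{2^k} = sup_{2^k ≤ |m| < 2^{k+1}} (1/(|m|+1))|∑_{j=0}^{m} a_j|. -/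
/-!
Since `a` vanishes on `k ≤ 0`, only the block `2^{n-1} ≤ m < 2^n` contributes to `Θ_n`
(for `n ≥ 1`). The GM condition at `N = 2^{n-1}` bounds it by `(C/N) ∑_{N/λ ≤ k ≤ λN} |a_k|`;
rotating by `e^{-iα}` puts every `a_k` within angle `β` of the positive axis, so this sum of
moduli is at most `1/cos β` times the modulus of the sum, a difference of two partial sums
`∑_{j=0}^{m} a_j` with `0 ≤ m ≤ λN`. A partial sum with `2^j ≤ m < 2^{j+1}` is at most
`2^{j+1} â_{2^j}`, and `2^j ≤ λ 2^n min(1, 2^{j-n})` because `2^j ≤ m ≤ λ 2^n`. This gives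
`C' = 8Cλ / cos β`; for `n = 0` the block is `|a_1| ≤ 2 â_1`.
-/

open scoped Real ENNReal BigOperators

/-- The symmetric difference `|Δa_m|`. -/
noncomputable def symDiff (a : ℤ → ℂ) (m : ℤ) : ℝ :=
  if 0 < m then ‖a m - a (m + 1)‖
  else if m < 0 then ‖a m - a (m - 1)‖
  else ‖a 0 - a 1‖ + ‖a 0 - a (-1)‖

/-- `⌊2^{k-1}⌋`. -/
def dyadLo (k : ℕ) : ℤ := if k = 0 then 0 else 2 ^ (k - 1)

/-- `Θ_n(a) = ∑_{⌊2^{n-1}⌋ ≤ |m| < 2^n} |Δa_m|`. -/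
noncomputable def Theta (a : ℤ → ℂ) (k : ℕ) : ℝ :=
  ∑ m ∈ (Finset.Icc (-(2 ^ k : ℤ) + 1) ((2 ^ k : ℤ) - 1)).filter
      (fun m => dyadLo k ≤ |m|), symDiff a m

/-- The partial sum `∑_{j=0}^{m} a_j`, interpreted as `∑_{j=m}^{0} a_j`
when `m < 0`. -/
noncomputable def psum (a : ℤ → ℂ) (m : ℤ) : ℂ :=
  ∑ j ∈ Finset.Icc (min m 0) (max m 0), a j

/-- `â_{2^k} = sup_{2^k ≤ |m| < 2^{k+1}} (1/(|m|+1)) |∑_{j=0}^{m} a_j|`. -/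
noncomputable def hatAvg (a : ℤ → ℂ) (k : ℕ) : ℝ≥0∞ :=
  ⨆ (m : ℤ) (_ : (2 ^ k : ℤ) ≤ |m| ∧ |m| < 2 ^ (k + 1)),
    ENNReal.ofReal (‖psum a m‖ / ((m.natAbs : ℝ) + 1))

/-- The class `GM-bar` with constant `C`: for every `n ≥ 0`,
`∑_{⌊2^{n-1}⌋ ≤ |m| < 2^n} |Δa_m| ≤ C · sup_{k≥0} min(1, 2^{k-n}) â_{2^k}`. -/
def GMBarWith (C : ℝ) (a : ℤ → ℂ) : Prop :=
  ∀ n : ℕ, ENNReal.ofReal (Theta a n) ≤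
    ENNReal.ofReal C *
      ⨆ k : ℕ, min 1 ((2 : ℝ≥0∞) ^ ((k : ℝ) - (n : ℝ))) * hatAvg a k

/-- The class `GM-bar`. -/
def GMBar (a : ℤ → ℂ) : Prop := ∃ C : ℝ, 0 < C ∧ GMBarWith C a

/-- The class `GM` for the one-sided part `{a_k}_{k≥1}`: there exist `C > 0`
and `λ > 1` with `∑_{k=n}^{2n} |a_k - a_{k+1}| ≤ (C/n) ∑_{⌈n/λ⌉ ≤ k ≤ ⌊λn⌋} |a_k|`
for all `n ≥ 1`. -/
def GMseq (a : ℤ → ℂ) : Prop :=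
  ∃ C : ℝ, 0 < C ∧ ∃ lam : ℝ, 1 < lam ∧ ∀ n : ℕ, 1 ≤ n →
    ∑ k ∈ Finset.Icc (n : ℤ) (2 * n), ‖a k - a (k + 1)‖ ≤
      (C / n) * ∑ k ∈ Finset.Icc ⌈(n : ℝ) / lam⌉ ⌊lam * (n : ℝ)⌋, ‖a k‖

open Finset

def InSector (α β : ℝ) (z : ℂ) : Prop :=
  ∃ r θ : ℝ, 0 ≤ r ∧ |θ - α| ≤ β ∧ z = r * Complex.exp (θ * Complex.I)

def GMWith (C lam : ℝ) (a : ℤ → ℂ) : Prop :=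
  ∀ n : ℕ, 1 ≤ n → ∑ k ∈ Icc (n : ℤ) (2 * n), ‖a k - a (k + 1)‖ ≤
    (C / n) * ∑ k ∈ Icc ⌈(n : ℝ) / lam⌉ ⌊lam * (n : ℝ)⌋, ‖a k‖

lemma InSector.cos_mul_norm_le_re_rotate {α β : ℝ} (hβ : β ≤ π) {z : ℂ} (hz : InSector α β z) :
    Real.cos β * ‖z‖ ≤ (Complex.exp (-α * Complex.I) * z).re := by
  obtain ⟨r, θ, hr, hθ, rfl⟩ := hz
  have hrot : Complex.exp (-α * Complex.I) * (r * Complex.exp (θ * Complex.I)) =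
      r * Complex.exp ((θ - α : ℝ) * Complex.I) := by
    rw [mul_left_comm, ← Complex.exp_add]
    push_cast
    ring_nf
  have hcos : Real.cos β ≤ Real.cos (θ - α) := by
    rw [← Real.cos_abs (θ - α)]
    exact Real.cos_le_cos_of_nonneg_of_le_pi (abs_nonneg _) hβ hθ
  rw [hrot, Complex.re_ofReal_mul, Complex.exp_ofReal_mul_I_re, norm_mul,
    Complex.norm_exp_ofReal_mul_I, Complex.norm_of_nonneg hr, mul_one, mul_comm r]
  exact mul_le_mul_of_nonneg_right hcos hr

lemma cos_mul_sum_norm_le_norm_sum {ι : Type*} {α β : ℝ} (hβ : β ≤ π) (s : Finset ι)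
    (z : ι → ℂ)
    (hz : ∀ i ∈ s, InSector α β (z i)) :
    Real.cos β * ∑ i ∈ s, ‖z i‖ ≤ ‖∑ i ∈ s, z i‖ :=
  calc Real.cos β * ∑ i ∈ s, ‖z i‖
      ≤ (Complex.exp (-α * Complex.I) * ∑ i ∈ s, z i).re := by
        rw [mul_sum, mul_sum, Complex.re_sum]
        exact sum_le_sum fun i hi => (hz i hi).cos_mul_norm_le_re_rotate hβ
    _ ≤ ‖Complex.exp (-α * Complex.I) * ∑ i ∈ s, z i‖ := Complex.re_le_norm _
    _ = ‖∑ i ∈ s, z i‖ := by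
        rw [norm_mul, ← Complex.ofReal_neg, Complex.norm_exp_ofReal_mul_I, one_mul]

lemma psum_of_nonneg (a : ℤ → ℂ) {m : ℤ} (hm : 0 ≤ m) : psum a m = ∑ j ∈ Ioc (-1) m, a j := by
  rw [psum, min_eq_right hm, max_eq_left hm]
  congr 1
  ext j
  simp only [mem_Icc, mem_Ioc]
  omega

lemma sum_Icc_eq_psum_sub_psum (a : ℤ → ℂ) {c d : ℤ} (hc : 1 ≤ c) (hcd : c ≤ d + 1) :
    ∑ k ∈ Icc c d, a k = psum a d - psum a (c - 1) := by
  have hIcc : Icc c d = Ioc (c - 1) d := by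
    ext j
    simp only [mem_Icc, mem_Ioc]
    omega
  rw [psum_of_nonneg a (by omega), psum_of_nonneg a (by omega), eq_sub_iff_add_eq', hIcc,
    ← sum_union (Ioc_disjoint_Ioc_of_le le_rfl), Ioc_union_Ioc_eq_Ioc (by omega) (by omega)]

noncomputable def hatSup (a : ℤ → ℂ) (n : ℕ) : ℝ≥0∞ :=
  ⨆ k : ℕ, min 1 ((2 : ℝ≥0∞) ^ ((k : ℝ) - (n : ℝ))) * hatAvg a k

lemma ofReal_norm_psum_le_pow_mul_hatAvg (a : ℤ → ℂ) (j m : ℕ) (hj : 2 ^ j ≤ m)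
    (hm : m < 2 ^ (j + 1)) :
    ENNReal.ofReal ‖psum a m‖ ≤ 2 ^ (j + 1) * hatAvg a j := by
  have hle : ENNReal.ofReal (‖psum a m‖ / ((m : ℝ) + 1)) ≤ hatAvg a j :=
    le_iSup₂_of_le (f := fun (m : ℤ) (_ : (2 ^ j : ℤ) ≤ |m| ∧ |m| < 2 ^ (j + 1)) =>
      ENNReal.ofReal (‖psum a m‖ / ((m.natAbs : ℝ) + 1))) (m : ℤ)
      (by rw [abs_of_nonneg (by positivity)]; exact ⟨by exact_mod_cast hj, by exact_mod_cast hm⟩)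
      (by simp)
  have hm1 : (m : ℝ) + 1 ≤ 2 ^ (j + 1) := by exact_mod_cast hm
  calc ENNReal.ofReal ‖psum a m‖
      = ENNReal.ofReal ((m : ℝ) + 1) * ENNReal.ofReal (‖psum a m‖ / ((m : ℝ) + 1)) := by
        rw [← ENNReal.ofReal_mul (by positivity), mul_div_cancel₀ _ (by positivity)]
    _ ≤ 2 ^ (j + 1) * hatAvg a j := by
        gcongr
        exact_mod_cast ENNReal.ofReal_le_ofReal hm1

lemma two_pow_le_mul_min_one_rpow {j n : ℕ} {M : ℝ} (hj : 2 ^ j ≤ M) (hn : 2 ^ n ≤ M) :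
    (2 : ℝ) ^ j ≤ M * min 1 (2 ^ ((j : ℝ) - n)) := by
  rcases le_total j n with hjn | hnj
  · have hle : (2 : ℝ) ^ ((j : ℝ) - n) ≤ 1 :=
      Real.rpow_le_one_of_one_le_of_nonpos one_le_two (by simpa using hjn)
    rw [min_eq_right hle, Real.rpow_sub two_pos, Real.rpow_natCast, Real.rpow_natCast,
      mul_div_assoc', le_div_iff₀ (by positivity), mul_comm]
    gcongr
  · have hge : 1 ≤ (2 : ℝ) ^ ((j : ℝ) - n) :=
      Real.one_le_rpow one_le_two (by simpa using hnj)
    rwa [min_eq_left hge, mul_one]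

lemma pow_mul_hatAvg_le_mul_hatSup (a : ℤ → ℂ) {j n : ℕ} {M : ℝ} (hj : 2 ^ j ≤ M)
    (hn : 2 ^ n ≤ M) :
    2 ^ j * hatAvg a j ≤ ENNReal.ofReal M * hatSup a n := by
  have hweight : (2 : ℝ≥0∞) ^ j ≤ ENNReal.ofReal M * min 1 (2 ^ ((j : ℝ) - n)) := by
    have := ENNReal.ofReal_le_ofReal (two_pow_le_mul_min_one_rpow hj hn)
    rwa [ENNReal.ofReal_mul (by linarith [pow_pos (two_pos : (0 : ℝ) < 2) n]), ENNReal.ofReal_min,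
      ENNReal.ofReal_one, ← ENNReal.ofReal_rpow_of_pos two_pos, ENNReal.ofReal_pow zero_le_two,
      ENNReal.ofReal_ofNat] at this
  calc 2 ^ j * hatAvg a j ≤ ENNReal.ofReal M * min 1 (2 ^ ((j : ℝ) - n)) * hatAvg a j := by
        gcongr
    _ ≤ ENNReal.ofReal M * hatSup a n := by
        rw [mul_assoc]
        gcongr
        exact le_iSup (fun k : ℕ => min 1 ((2 : ℝ≥0∞) ^ ((k : ℝ) - n)) * hatAvg a k) j

lemma ofReal_norm_psum_le_mul_hatSup (a : ℤ → ℂ) (ha : a 0 = 0) (n : ℕ) {m : ℤ} (hm : 0 ≤ m)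
    {M : ℝ} (hmM : (m : ℝ) ≤ M) (hnM : 2 ^ n ≤ M) :
    ENNReal.ofReal ‖psum a m‖ ≤ ENNReal.ofReal (2 * M) * hatSup a n := by
  lift m to ℕ using hm
  rcases Nat.eq_zero_or_pos m with rfl | hpos
  · simp [psum, ha]
  set j := Nat.log 2 m
  have hj : 2 ^ j ≤ m := Nat.pow_log_le_self 2 hpos.ne'
  have hjM : (2 : ℝ) ^ j ≤ M := le_trans (by exact_mod_cast hj) hmM
  calc ENNReal.ofReal ‖psum a m‖ ≤ 2 ^ (j + 1) * hatAvg a j :=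
        ofReal_norm_psum_le_pow_mul_hatAvg a j m hj (Nat.lt_pow_succ_log_self one_lt_two m)
    _ = 2 * (2 ^ j * hatAvg a j) := by ring
    _ ≤ 2 * (ENNReal.ofReal M * hatSup a n) := by
        gcongr 2 * ?_
        exact pow_mul_hatAvg_le_mul_hatSup a hjM hnM
    _ = ENNReal.ofReal (2 * M) * hatSup a n := by
        rw [ENNReal.ofReal_mul zero_le_two, ENNReal.ofReal_ofNat, mul_assoc]

lemma Theta_zero_of_vanishing {a : ℤ → ℂ} (h0 : ∀ k ≤ 0, a k = 0) : Theta a 0 = ‖psum a 1‖ := by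
  have hpsum : psum a 1 = a 1 := by
    rw [psum_of_nonneg a zero_le_one, show Ioc (-1 : ℤ) 1 = {0, 1} by decide,
      sum_pair zero_ne_one, h0 0 le_rfl, zero_add]
  rw [hpsum, Theta, show (Icc (-(2 ^ 0 : ℤ) + 1) (2 ^ 0 - 1)).filter (dyadLo 0 ≤ |·|) = {0} by
    decide, sum_singleton, symDiff]
  simp [h0 0 le_rfl, h0 (-1) (by norm_num)]

lemma Theta_succ_of_vanishing {a : ℤ → ℂ} (h0 : ∀ k ≤ 0, a k = 0) (n : ℕ) :
    Theta a (n + 1) = ∑ m ∈ Ico (2 ^ n : ℤ) (2 ^ (n + 1)), ‖a m - a (m + 1)‖ := by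
  have hlo : dyadLo (n + 1) = 2 ^ n := by simp [dyadLo]
  have hpow : (2 : ℤ) ^ (n + 1) = 2 * 2 ^ n := pow_succ' 2 n
  have hpos : (0 : ℤ) < 2 ^ n := by positivity
  rw [Theta]
  symm
  refine sum_subset_zero_on_sdiff ?_ ?_ ?_
  · intro m hm
    simp only [mem_Ico] at hm
    simp only [mem_filter, mem_Icc, hlo, abs_of_pos (hpos.trans_le hm.1)]
    omega
  · intro m hm
    simp only [mem_sdiff, mem_filter, mem_Icc, mem_Ico, hlo] at hm
    have hneg : m < 0 := by
      by_contra!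
      rw [abs_of_nonneg this] at hm
      omega
    rw [symDiff, if_neg (by omega), if_pos hneg, h0 m (by omega), h0 (m - 1) (by omega), sub_zero,
      norm_zero]
  · intro m hm
    rw [symDiff, if_pos (hpos.trans_le (mem_Ico.1 hm).1)]

lemma cos_mul_sum_Icc_norm_le {α β : ℝ} (hβ : β ≤ π) {a : ℤ → ℂ}
    (hsec : ∀ k : ℤ, 1 ≤ k → InSector α β (a k))
    {c d : ℤ} (hc : 1 ≤ c) (hcd : c ≤ d + 1) :
    Real.cos β * ∑ k ∈ Icc c d, ‖a k‖ ≤ ‖psum a d‖ + ‖psum a (c - 1)‖ :=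
  calc Real.cos β * ∑ k ∈ Icc c d, ‖a k‖ ≤ ‖∑ k ∈ Icc c d, a k‖ :=
        cos_mul_sum_norm_le_norm_sum hβ _ a fun k hk => hsec k (hc.trans (mem_Icc.1 hk).1)
    _ = ‖psum a d - psum a (c - 1)‖ := by rw [sum_Icc_eq_psum_sub_psum a hc hcd]
    _ ≤ ‖psum a d‖ + ‖psum a (c - 1)‖ := norm_sub_le _ _

lemma ceil_div_le_floor_mul_add_one {lam x : ℝ} (hlam : 1 ≤ lam) (hx : 0 ≤ x) :
    ⌈x / lam⌉ ≤ ⌊lam * x⌋ + 1 :=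
  calc ⌈x / lam⌉ ≤ ⌈x⌉ := Int.ceil_mono (div_le_self hx hlam)
    _ ≤ ⌊x⌋ + 1 := Int.ceil_le_floor_add_one x
    _ ≤ ⌊lam * x⌋ + 1 := by gcongr; exact le_mul_of_one_le_left hx hlam

lemma Theta_succ_le_mul_norm_psum {α β : ℝ} (hβ : β ≤ π) (hcos : 0 < Real.cos β)
    {a : ℤ → ℂ} (h0 : ∀ k ≤ 0, a k = 0)
    (hsec : ∀ k : ℤ, 1 ≤ k → InSector α β (a k))
    {C lam : ℝ} (hC : 0 ≤ C) (hlam : 1 < lam)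
    (hgm : GMWith C lam a) (n : ℕ) :
    Theta a (n + 1) ≤ C / (2 ^ n * Real.cos β) *
      (‖psum a ⌊lam * 2 ^ n⌋‖ + ‖psum a (⌈2 ^ n / lam⌉ - 1)‖) := by
  have hc : 1 ≤ ⌈(2 : ℝ) ^ n / lam⌉ := Int.one_le_ceil_iff.2 (by positivity)
  have hgm_n := hgm (2 ^ n) Nat.one_le_two_pow
  push_cast at hgm_n
  calc Theta a (n + 1) ≤ ∑ k ∈ Icc (2 ^ n : ℤ) (2 * 2 ^ n), ‖a k - a (k + 1)‖ := by
        rw [Theta_succ_of_vanishing h0, pow_succ']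
        exact sum_le_sum_of_subset_of_nonneg Ico_subset_Icc_self fun _ _ _ => norm_nonneg _
    _ ≤ C / 2 ^ n * ∑ k ∈ Icc ⌈2 ^ n / lam⌉ ⌊lam * 2 ^ n⌋, ‖a k‖ := hgm_n
    _ ≤ C / (2 ^ n * Real.cos β) * (‖psum a ⌊lam * 2 ^ n⌋‖ + ‖psum a (⌈2 ^ n / lam⌉ - 1)‖) := by
        rw [← div_div, div_mul_eq_mul_div _ (Real.cos β), le_div_iff₀ hcos, mul_assoc]
        gcongr
        rw [mul_comm]
        exact cos_mul_sum_Icc_norm_le hβ hsec hc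
          (ceil_div_le_floor_mul_add_one hlam.le (by positivity))

lemma ofReal_Theta_succ_le {α β : ℝ} (hβ : β ≤ π) (hcos : 0 < Real.cos β) {a : ℤ → ℂ}
    (h0 : ∀ k ≤ 0, a k = 0)
    (hsec : ∀ k : ℤ, 1 ≤ k → InSector α β (a k))
    {C lam : ℝ} (hC : 0 ≤ C) (hlam : 1 < lam)
    (hgm : GMWith C lam a) (n : ℕ) :
    ENNReal.ofReal (Theta a (n + 1)) ≤
      ENNReal.ofReal (8 * C * lam / Real.cos β) * hatSup a (n + 1) := by
  set c := ⌈(2 : ℝ) ^ n / lam⌉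
  set d := ⌊lam * (2 : ℝ) ^ n⌋
  set M := lam * 2 ^ (n + 1)
  have hc : 1 ≤ c := Int.one_le_ceil_iff.2 (by positivity)
  have hcd : c ≤ d + 1 := ceil_div_le_floor_mul_add_one hlam.le (by positivity)
  have hdM : (d : ℝ) ≤ M :=
    (Int.floor_le _).trans <| by
      simp only [M, pow_succ]
      nlinarith [pow_pos (two_pos : (0 : ℝ) < 2) n]
  have hcM : ((c - 1 : ℤ) : ℝ) ≤ M := le_trans (by exact_mod_cast (by omega : c - 1 ≤ d)) hdM
  have hnM : (2 : ℝ) ^ (n + 1) ≤ M := le_mul_of_one_le_left (by positivity) hlam.le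
  have hpsum (m : ℤ) (hm : 0 ≤ m) (hmM : (m : ℝ) ≤ M) :=
    ofReal_norm_psum_le_mul_hatSup a (h0 0 le_rfl) (n + 1) hm hmM hnM
  calc ENNReal.ofReal (Theta a (n + 1))
      ≤ ENNReal.ofReal (C / (2 ^ n * Real.cos β)) *
          (ENNReal.ofReal ‖psum a d‖ + ENNReal.ofReal ‖psum a (c - 1)‖) := by
        rw [← ENNReal.ofReal_add (norm_nonneg _) (norm_nonneg _),
          ← ENNReal.ofReal_mul (by positivity)]
        exact ENNReal.ofReal_le_ofReal
          (Theta_succ_le_mul_norm_psum hβ hcos h0 hsec hC hlam hgm n)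
    _ ≤ ENNReal.ofReal (C / (2 ^ n * Real.cos β)) *
          (ENNReal.ofReal (2 * M) * hatSup a (n + 1) +
            ENNReal.ofReal (2 * M) * hatSup a (n + 1)) := by
        gcongr
        exacts [hpsum d (by omega) hdM, hpsum (c - 1) (by omega) hcM]
    _ = ENNReal.ofReal (8 * C * lam / Real.cos β) * hatSup a (n + 1) := by
        rw [← add_mul, ← ENNReal.ofReal_add (by positivity) (by positivity), ← mul_assoc,
          ← ENNReal.ofReal_mul (by positivity)]
        congr 2
        field_simp
        ring

theorem sector_GM_subset_GMbar_general (α β : ℝ)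
    (hβ0 : 0 ≤ β) (hβ1 : β < π / 2) (a : ℤ → ℂ)
    (h0 : ∀ k : ℤ, k ≤ 0 → a k = 0)
    (hsec : ∀ k : ℤ, 1 ≤ k → ∃ r θ : ℝ, 0 ≤ r ∧ |θ - α| ≤ β ∧
      a k = (r : ℂ) * Complex.exp ((θ : ℂ) * Complex.I))
    (hgm : GMseq a) :
    GMBar a := by
  obtain ⟨C, hC, lam, hlam, hgm⟩ := hgm
  have hcos : 0 < Real.cos β := Real.cos_pos_of_mem_Ioo ⟨by linarith [Real.pi_pos], hβ1⟩
  have hβ : β ≤ π := by linarith [Real.pi_pos]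
  set C' := max 2 (8 * C * lam / Real.cos β)
  suffices h : ∀ n, ENNReal.ofReal (Theta a n) ≤ ENNReal.ofReal C' * hatSup a n from
    ⟨C', lt_max_of_lt_left two_pos, h⟩
  rintro (_ | n)
  · calc ENNReal.ofReal (Theta a 0) ≤ ENNReal.ofReal (2 * 1) * hatSup a 0 := by
          rw [Theta_zero_of_vanishing h0]
          exact ofReal_norm_psum_le_mul_hatSup a (h0 0 le_rfl) 0 zero_le_one (by simp) (by simp)
      _ ≤ ENNReal.ofReal C' * hatSup a 0 := by
          gcongr
          simp [C']
  · calc ENNReal.ofReal (Theta a (n + 1))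
        ≤ ENNReal.ofReal (8 * C * lam / Real.cos β) * hatSup a (n + 1) :=
          ofReal_Theta_succ_le hβ hcos h0 hsec hC.le hlam hgm n
      _ ≤ ENNReal.ofReal C' * hatSup a (n + 1) := by
          gcongr
          exact le_max_right _ _

/-- If `a_k = 0` for `k ≤ 0`, the values `a_k` for `k ≥ 1` lie in a sector
`S_{α,β}` with `0 ≤ α < 2π`, `0 ≤ β < π/2`, and `{a_k}_{k≥1} ∈ GM`, then the
two-sided sequence `{a_k}_{k∈ℤ}` belongs to `GM-bar`. -/
theorem sector_GM_subset_GMbar (α β : ℝ) (hα0 : 0 ≤ α) (hα1 : α < 2 * π)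
    (hβ0 : 0 ≤ β) (hβ1 : β < π / 2) (a : ℤ → ℂ)
    (h0 : ∀ k : ℤ, k ≤ 0 → a k = 0)
    (hsec : ∀ k : ℤ, 1 ≤ k → ∃ r θ : ℝ, 0 ≤ r ∧ |θ - α| ≤ β ∧
      a k = (r : ℂ) * Complex.exp ((θ : ℂ) * Complex.I))
    (hgm : GMseq a) :
    GMBar a :=
  sector_GM_subset_GMbar_general α β hβ0 hβ1 a h0 hsec hgm
end

section
/- There exists a sequence {a_k}_{k∈ℤ} with a_k = 0 for k ≤ 0 which belongs to GM-bar but whose restriction {a_k}_{k≥1} does not belong to the class GM. Concretely, let a_k = 0 for k ≤ 15, and for n ≥ 4 and 2^n ≤ k < 2^{n+1}: a_k = 2^{−n} if k is odd; a_k = 0 if k is even and 2^n ≤ k < 2^n + ⌊√n⌋; a_k = 2^{−n} if k is even and 2^n + ⌊√n⌋ ≤ k < 2^{n+1}. Then {a_k}_{k∈ℤ} ∈ GM-bar but {a_k}_{k≥1} ∉ GM. -/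
open scoped ENNReal BigOperators

/-- The explicit sequence: `a_k = 0` for `k ≤ 15`; for `n ≥ 4` and
`2^n ≤ k < 2^{n+1}`: `a_k = 2^{-n}` if `k` is odd, `a_k = 0` if `k` is even
and `2^n ≤ k < 2^n + ⌊√n⌋`, and `a_k = 2^{-n}` otherwise. -/
noncomputable def exSeq : ℤ → ℂ := fun k =>
  if k ≤ 15 then 0
  else
    let n := Nat.log 2 k.toNat
    if Odd k then ((2 : ℂ) ^ n)⁻¹
    else if k < (2 ^ n : ℤ) + (Nat.sqrt n : ℤ) then 0
    else ((2 : ℂ) ^ n)⁻¹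

/-! In the dyadic block `[2^N, 2^{N+1})` the sequence equals `2^{-N}` except at the even indices
among the first `⌊√N⌋`, where it vanishes. Its variation over the block is therefore of order
`√N 2^{-N}`. At `n = 2^N` this beats the GM bound `(C/n) ∑ |a_k| = O(λ² 2^{-N})` (as `|a_k| ≤ 2/k`),
so the sequence is not GM. For GM-bar the variation is compared with the averaged partial sums
instead: the idx indices of each block contribute `1/2`, so `â_{2^N} ≳ N 2^{-N}`, which dominates
`√N 2^{-N}`. -/

open Finset

lemma log_two_toNat_eq {N : ℕ} {k : ℤ} (h1 : 2 ^ N ≤ k) (h2 : k < 2 ^ (N + 1)) :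
    Nat.log 2 k.toNat = N := by
  have hN : ((2 ^ N : ℕ) : ℤ) = 2 ^ N := by push_cast; rfl
  have hN1 : ((2 ^ (N + 1) : ℕ) : ℤ) = 2 ^ (N + 1) := by push_cast; rfl
  exact Nat.log_eq_of_pow_le_of_lt_pow (by omega) (by omega)

lemma sqrt_lt_two_pow (N : ℕ) : (Nat.sqrt N : ℤ) < 2 ^ N := by
  exact_mod_cast (Nat.sqrt_le_self N).trans_lt Nat.lt_two_pow_self

lemma symDiff_nonneg (a : ℤ → ℂ) (m : ℤ) : 0 ≤ symDiff a m := by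
  unfold symDiff; split_ifs <;> positivity

lemma gmBarWith_of_theta_le {C : ℝ} {a : ℤ → ℂ}
    (h : ∀ n, ENNReal.ofReal (Theta a n) ≤ ENNReal.ofReal C * hatAvg a n) : GMBarWith C a :=
  fun n => (h n).trans (by gcongr; exact le_iSup_of_le n (by simp))

lemma sum_norm_Icc_ceil_floor_le {a : ℤ → ℂ} {B lam : ℝ} (ha : ∀ k : ℤ, 1 ≤ k → ‖a k‖ ≤ B / k)
    (hlam : 0 < lam) {n : ℕ} (hn : 0 < n) :
    ∑ k ∈ Icc ⌈(n : ℝ) / lam⌉ ⌊lam * n⌋, ‖a k‖ ≤ B * lam ^ 2 := by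
  have hB : 0 ≤ B := by simpa using (norm_nonneg _).trans (ha 1 le_rfl)
  have hn' : (0 : ℝ) < n := by exact_mod_cast hn
  have hceil : 1 ≤ ⌈(n : ℝ) / lam⌉ := Int.one_le_ceil_iff.2 (by positivity)
  have hterm : ∀ k ∈ Icc ⌈(n : ℝ) / lam⌉ ⌊lam * n⌋, ‖a k‖ ≤ B * lam / n := by
    intro k hk
    have hk := (mem_Icc.1 hk).1
    calc ‖a k‖ ≤ B / k := ha k (hceil.trans hk)
      _ ≤ B / (n / lam) := div_le_div_of_nonneg_left hB (by positivity)
          ((Int.le_ceil _).trans (by exact_mod_cast hk))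
      _ = B * lam / n := by field_simp
  have hcard : (#(Icc ⌈(n : ℝ) / lam⌉ ⌊lam * n⌋) : ℝ) ≤ lam * n := by
    have : 0 ≤ ⌊lam * n⌋ := Int.floor_nonneg.2 (by positivity)
    have : (#(Icc ⌈(n : ℝ) / lam⌉ ⌊lam * n⌋) : ℤ) ≤ ⌊lam * n⌋ := by rw [Int.card_Icc]; omega
    calc (#(Icc ⌈(n : ℝ) / lam⌉ ⌊lam * n⌋) : ℝ) = ((#(Icc ⌈(n : ℝ) / lam⌉ ⌊lam * n⌋) : ℤ) : ℝ) :=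
          by norm_cast
      _ ≤ ⌊lam * n⌋ := by exact_mod_cast this
      _ ≤ lam * n := Int.floor_le _
  calc ∑ k ∈ Icc ⌈(n : ℝ) / lam⌉ ⌊lam * n⌋, ‖a k‖
      ≤ #(Icc ⌈(n : ℝ) / lam⌉ ⌊lam * n⌋) * (B * lam / n) := by
        simpa using sum_le_card_nsmul _ _ _ hterm
    _ ≤ lam * n * (B * lam / n) := by gcongr
    _ = B * lam ^ 2 := by field_simp

section exSeq

variable {N : ℕ} {k : ℤ}

lemma exSeq_of_mem_block (hN : 4 ≤ N) (h1 : 2 ^ N ≤ k) (h2 : k < 2 ^ (N + 1)) :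
    exSeq k = if Odd k then ((2 : ℂ) ^ N)⁻¹
      else if k < 2 ^ N + (Nat.sqrt N : ℤ) then 0 else ((2 : ℂ) ^ N)⁻¹ := by
  have : (2 : ℤ) ^ 4 ≤ 2 ^ N := pow_le_pow_right₀ (by norm_num) hN
  simp only [exSeq, log_two_toNat_eq h1 h2, if_neg (show ¬ k ≤ 15 by omega)]

lemma exSeq_of_odd (hN : 4 ≤ N) (h1 : 2 ^ N ≤ k) (h2 : k < 2 ^ (N + 1)) (hk : Odd k) :
    exSeq k = ((2 : ℂ) ^ N)⁻¹ := by
  rw [exSeq_of_mem_block hN h1 h2, if_pos hk]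

lemma exSeq_of_even (hN : 4 ≤ N) (h1 : 2 ^ N ≤ k) (h2 : k < 2 ^ N + (Nat.sqrt N : ℤ))
    (hk : Even k) : exSeq k = 0 := by
  have := sqrt_lt_two_pow N
  rw [exSeq_of_mem_block hN h1 (by rw [pow_succ]; omega), if_neg (Int.not_odd_iff_even.2 hk),
    if_pos h2]

lemma exSeq_of_sqrt_le (hN : 4 ≤ N) (h1 : 2 ^ N + (Nat.sqrt N : ℤ) ≤ k)
    (h2 : k < 2 ^ (N + 1)) : exSeq k = ((2 : ℂ) ^ N)⁻¹ := by
  rw [exSeq_of_mem_block hN (by omega) h2, if_neg (not_lt.2 h1), ite_self]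

lemma exSeq_eq_zero_or (k : ℤ) :
    exSeq k = 0 ∨ exSeq k = ((2 : ℂ) ^ Nat.log 2 k.toNat)⁻¹ := by
  simp only [exSeq]
  split_ifs <;> simp

lemma ofReal_norm_exSeq (k : ℤ) : ((‖exSeq k‖ : ℝ) : ℂ) = exSeq k := by
  rcases exSeq_eq_zero_or k with h | h <;> simp [h]

lemma norm_exSeq_le_of_two_pow_le (h : 2 ^ N ≤ k) : ‖exSeq k‖ ≤ ((2 : ℝ) ^ N)⁻¹ := by
  rcases exSeq_eq_zero_or k with hk | hk
  · simp [hk]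
  have hpos : (0 : ℤ) < 2 ^ N := by positivity
  have hNk : N ≤ Nat.log 2 k.toNat :=
    Nat.le_log_of_pow_le (by norm_num) (by zify; rw [Int.toNat_of_nonneg (by omega)]; omega)
  rw [hk, norm_inv, norm_pow, Complex.norm_two]
  exact inv_anti₀ (by positivity) (pow_le_pow_right₀ (by norm_num) hNk)

lemma norm_exSeq_le_two_div (hk : 1 ≤ k) : ‖exSeq k‖ ≤ 2 / k := by
  set N := Nat.log 2 k.toNat
  have hk' : (k.toNat : ℤ) = k := Int.toNat_of_nonneg (by omega)
  have hlo : 2 ^ N ≤ k := by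
    rw [← hk']; exact_mod_cast Nat.pow_log_le_self 2 (by omega)
  have hhi : (k : ℝ) < 2 ^ (N + 1) := by
    rw [← hk']; exact_mod_cast Nat.lt_pow_succ_log_self (by norm_num) _
  calc ‖exSeq k‖ ≤ ((2 : ℝ) ^ N)⁻¹ := norm_exSeq_le_of_two_pow_le hlo
    _ = 2 / 2 ^ (N + 1) := by rw [pow_succ]; field_simp
    _ ≤ 2 / k := div_le_div_of_nonneg_left (by norm_num) (by exact_mod_cast hk) hhi.le

lemma exSeq_of_le_sixteen (h : k ≤ 16) : exSeq k = 0 := by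
  rcases h.lt_or_eq with h | rfl
  · simp [exSeq, show k ≤ 15 by omega]
  · exact exSeq_of_even le_rfl (by norm_num) (by simp [Nat.sqrt_eq' 2]) (by decide)

lemma symDiff_exSeq_of_le (h : k ≤ 15) : symDiff exSeq k = 0 := by
  simp [symDiff, exSeq_of_le_sixteen (show k ≤ 16 by omega),
    exSeq_of_le_sixteen (show k + 1 ≤ 16 by omega), exSeq_of_le_sixteen (show k - 1 ≤ 16 by omega),
    exSeq_of_le_sixteen (show (0 : ℤ) ≤ 16 by norm_num),
    exSeq_of_le_sixteen (show (1 : ℤ) ≤ 16 by norm_num),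
    exSeq_of_le_sixteen (show (-1 : ℤ) ≤ 16 by norm_num)]

lemma theta_exSeq_of_le {n : ℕ} (hn : n ≤ 4) : Theta exSeq n = 0 := by
  have : (2 : ℤ) ^ n ≤ 2 ^ 4 := pow_le_pow_right₀ (by norm_num) hn
  refine sum_eq_zero fun k hk => symDiff_exSeq_of_le ?_
  have := (mem_Icc.1 (mem_filter.1 hk).1).2
  omega

lemma symDiff_exSeq_of_sqrt_le (hN : 4 ≤ N) (h1 : 2 ^ N + (Nat.sqrt N : ℤ) ≤ k)
    (h2 : k + 1 < 2 ^ (N + 1)) : symDiff exSeq k = 0 := by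
  have : 0 < k := lt_of_lt_of_le (by positivity) h1
  simp [symDiff, this, exSeq_of_sqrt_le hN h1 (by omega), exSeq_of_sqrt_le hN (by omega) h2]

lemma symDiff_exSeq_le (h : 2 ^ N ≤ k) : symDiff exSeq k ≤ 2 * ((2 : ℝ) ^ N)⁻¹ := by
  have : 0 < k := lt_of_lt_of_le (by positivity) h
  rw [symDiff, if_pos this]
  calc ‖exSeq k - exSeq (k + 1)‖ ≤ ‖exSeq k‖ + ‖exSeq (k + 1)‖ := norm_sub_le _ _
    _ ≤ ((2 : ℝ) ^ N)⁻¹ + ((2 : ℝ) ^ N)⁻¹ := add_le_add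
        (norm_exSeq_le_of_two_pow_le h) (norm_exSeq_le_of_two_pow_le (by omega))
    _ = 2 * ((2 : ℝ) ^ N)⁻¹ := by ring

end exSeq

lemma theta_exSeq_succ_le {N : ℕ} (hN : 4 ≤ N) :
    Theta exSeq (N + 1) ≤ (Nat.sqrt N + 1) * (2 * ((2 : ℝ) ^ N)⁻¹) := by
  set s : ℤ := (Nat.sqrt N : ℤ)
  set A := (Icc (-(2 ^ (N + 1) : ℤ) + 1) (2 ^ (N + 1) - 1)).filter (fun m => dyadLo (N + 1) ≤ |m|)
  -- `Δa_m` vanishes off `S`: the sequence is zero for `m ≤ 16` and constant on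
  -- `[2^N + ⌊√N⌋, 2^{N+1})`
  set S : Finset ℤ := insert (2 ^ (N + 1) - 1) (Icc (2 ^ N) (2 ^ N + s - 1))
  have hpow : (2 : ℤ) ^ (N + 1) = 2 * 2 ^ N := pow_succ' 2 N
  have hs : s < 2 ^ N := sqrt_lt_two_pow N
  have hcard : #S ≤ Nat.sqrt N + 1 := (card_insert_le _ _).trans (by simp [s])
  have hvanish : ∀ m ∈ A, m ∉ A ∩ S → symDiff exSeq m = 0 := by
    intro m hmA hmAS
    have hmS : m ∉ S := fun h => hmAS (mem_inter.2 ⟨hmA, h⟩)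
    simp only [A, mem_filter, mem_Icc, dyadLo, Nat.add_sub_cancel, if_neg N.succ_ne_zero] at hmA
    simp only [S, mem_insert, mem_Icc, not_or, not_and, not_le] at hmS
    obtain ⟨⟨hlo, hhi⟩, habs⟩ := hmA
    rcases le_abs'.1 habs with hneg | hpos
    · exact symDiff_exSeq_of_le (by omega)
    · exact symDiff_exSeq_of_sqrt_le hN (by have := hmS.2 hpos; omega) (by omega)
  calc Theta exSeq (N + 1) = ∑ m ∈ A ∩ S, symDiff exSeq m :=
        (sum_subset inter_subset_left hvanish).symm
    _ ≤ ∑ m ∈ S, symDiff exSeq m :=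
        sum_le_sum_of_subset_of_nonneg inter_subset_right fun _ _ _ => symDiff_nonneg _ _
    _ ≤ #S • (2 * ((2 : ℝ) ^ N)⁻¹) := by
        refine sum_le_card_nsmul _ _ _ fun m hm => symDiff_exSeq_le ?_
        rcases mem_insert.1 hm with rfl | hm
        · omega
        · exact (mem_Icc.1 hm).1
    _ ≤ (Nat.sqrt N + 1) * (2 * ((2 : ℝ) ^ N)⁻¹) := by
        rw [nsmul_eq_mul]; gcongr; exact_mod_cast hcard

lemma norm_psum_exSeq {m : ℤ} (hm : 0 ≤ m) : ‖psum exSeq m‖ = ∑ j ∈ Icc 0 m, ‖exSeq j‖ := by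
  rw [psum, min_eq_right hm, max_eq_left hm]
  conv_lhs => rw [← sum_congr rfl fun j _ => ofReal_norm_exSeq j]
  rw [← Complex.ofReal_sum, Complex.norm_real,
    Real.norm_of_nonneg (sum_nonneg fun _ _ => norm_nonneg _)]

lemma half_le_sum_norm_exSeq_block {N : ℕ} (hN : 3 ≤ N) :
    1 / 2 ≤ ∑ j ∈ Ico (2 ^ (N + 1) : ℤ) (2 ^ (N + 2)), ‖exSeq j‖ := by
  set idx : ℕ → ℤ := fun i => 2 ^ (N + 1) + 2 * i + 1
  have hpow : (2 : ℤ) ^ (N + 2) = 2 * 2 ^ (N + 1) := pow_succ' 2 (N + 1)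
  have hpowN : (2 : ℤ) ^ (N + 1) = 2 * 2 ^ N := pow_succ' 2 N
  have hmem : ∀ i ∈ range (2 ^ N), 2 ^ (N + 1) ≤ idx i ∧ idx i < 2 ^ (N + 2) := by
    intro i hi
    have : (i : ℤ) < 2 ^ N := by exact_mod_cast mem_range.1 hi
    simp only [idx]
    omega
  calc (1 / 2 : ℝ) = ∑ i ∈ range (2 ^ N), ((2 : ℝ) ^ (N + 1))⁻¹ := by
        rw [sum_const, card_range, nsmul_eq_mul, pow_succ]; push_cast; field_simp
    _ = ∑ j ∈ (range (2 ^ N)).image idx, ‖exSeq j‖ := by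
        rw [sum_image fun i _ j _ h => by simp only [idx] at h; omega]
        refine sum_congr rfl fun i hi => ?_
        have hodd : Odd (idx i) := ⟨2 ^ N + i, by simp only [idx]; omega⟩
        rw [exSeq_of_odd (by omega) (hmem i hi).1 (hmem i hi).2 hodd]
        simp
    _ ≤ ∑ j ∈ Ico (2 ^ (N + 1) : ℤ) (2 ^ (N + 2)), ‖exSeq j‖ :=
        sum_le_sum_of_subset_of_nonneg (image_subset_iff.2 fun i hi => mem_Ico.2 (hmem i hi))
          fun _ _ _ => norm_nonneg _

lemma le_sum_norm_exSeq_Ico {n : ℕ} (hn : 3 ≤ n) :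
    ((n : ℝ) - 3) / 2 ≤ ∑ j ∈ Ico (0 : ℤ) (2 ^ (n + 1)), ‖exSeq j‖ := by
  induction n, hn using Nat.le_induction with
  | base => norm_num; exact sum_nonneg fun _ _ => norm_nonneg _
  | succ n hn ih =>
    rw [← Ico_union_Ico_eq_Ico (b := 2 ^ (n + 1)) (by positivity)
      (pow_le_pow_right₀ (by norm_num) (by omega)), sum_union (Ico_disjoint_Ico_consecutive _ _ _)]
    have := half_le_sum_norm_exSeq_block hn
    push_cast
    linarith

lemma ofReal_le_hatAvg_exSeq {n : ℕ} (hn : 3 ≤ n) :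
    ENNReal.ofReal (((n : ℝ) - 3) / 2 / 2 ^ (n + 1)) ≤ hatAvg exSeq n := by
  have hpow : (2 : ℤ) ^ (n + 1) = 2 * 2 ^ n := pow_succ' 2 n
  have hpos : (0 : ℤ) < 2 ^ n := by positivity
  have hm : 0 ≤ (2 : ℤ) ^ (n + 1) - 1 := by omega
  refine le_iSup₂_of_le (2 ^ (n + 1) - 1) (by rw [abs_of_nonneg hm]; omega)
    (ENNReal.ofReal_le_ofReal ?_)
  have hden : (((2 : ℤ) ^ (n + 1) - 1).natAbs : ℝ) + 1 = 2 ^ (n + 1) := by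
    rw [Nat.cast_natAbs, abs_of_nonneg hm]; push_cast; ring
  rw [norm_psum_exSeq hm, Icc_sub_one_right_eq_Ico, hden]
  gcongr
  exact le_sum_norm_exSeq_Ico hn

lemma gmBarWith_exSeq : GMBarWith 64 exSeq := by
  refine gmBarWith_of_theta_le fun n => ?_
  rcases le_or_gt n 4 with hn | hn
  · simp [theta_exSeq_of_le hn]
  obtain ⟨N, rfl⟩ : ∃ N, n = N + 1 := ⟨n - 1, by omega⟩
  have : (Nat.sqrt N : ℝ) ≤ N := by exact_mod_cast Nat.sqrt_le_self N
  have : (4 : ℝ) ≤ N := by exact_mod_cast (by omega : 4 ≤ N)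
  calc ENNReal.ofReal (Theta exSeq (N + 1))
      ≤ ENNReal.ofReal (64 * ((((N + 1 : ℕ) : ℝ) - 3) / 2 / 2 ^ (N + 1 + 1))) := by
        refine ENNReal.ofReal_le_ofReal ((theta_exSeq_succ_le (by omega)).trans ?_)
        rw [pow_succ, pow_succ]
        field_simp
        push_cast
        linarith
    _ = ENNReal.ofReal 64 * ENNReal.ofReal ((((N + 1 : ℕ) : ℝ) - 3) / 2 / 2 ^ (N + 1 + 1)) :=
        ENNReal.ofReal_mul (by norm_num)
    _ ≤ ENNReal.ofReal 64 * hatAvg exSeq (N + 1) := by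
        gcongr; exact ofReal_le_hatAvg_exSeq (by omega)

lemma norm_exSeq_sub_succ {N : ℕ} {k : ℤ} (hN : 4 ≤ N) (h1 : 2 ^ N ≤ k)
    (h2 : k + 1 < 2 ^ N + (Nat.sqrt N : ℤ)) : ‖exSeq k - exSeq (k + 1)‖ = ((2 : ℝ) ^ N)⁻¹ := by
  have := sqrt_lt_two_pow N
  have hpow : (2 : ℤ) ^ (N + 1) = 2 * 2 ^ N := pow_succ' 2 N
  rcases Int.even_or_odd k with hk | hk
  · rw [exSeq_of_even hN h1 (by omega) hk, exSeq_of_odd hN (by omega) (by omega) hk.add_one]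
    simp
  · rw [exSeq_of_odd hN h1 (by omega) hk, exSeq_of_even hN (by omega) h2 hk.add_one]
    simp

lemma sqrt_sub_one_mul_le_sum_norm_sub {N : ℕ} (hN : 4 ≤ N) :
    ((Nat.sqrt N : ℝ) - 1) * ((2 : ℝ) ^ N)⁻¹ ≤
      ∑ k ∈ Icc (2 ^ N : ℤ) (2 * 2 ^ N), ‖exSeq k - exSeq (k + 1)‖ := by
  have hs : (2 : ℤ) ≤ Nat.sqrt N := by exact_mod_cast Nat.le_sqrt.2 hN
  set s : ℤ := (Nat.sqrt N : ℤ)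
  have := sqrt_lt_two_pow N
  have hcard : ((#(Ico (2 ^ N : ℤ) (2 ^ N + s - 1)) : ℤ) : ℝ) = (Nat.sqrt N : ℝ) - 1 := by
    rw [Int.card_Ico, Int.toNat_of_nonneg (by omega)]
    push_cast [s]
    ring
  calc ((Nat.sqrt N : ℝ) - 1) * ((2 : ℝ) ^ N)⁻¹
      = ∑ k ∈ Ico (2 ^ N : ℤ) (2 ^ N + s - 1), ((2 : ℝ) ^ N)⁻¹ := by
        rw [sum_const, nsmul_eq_mul, ← hcard]; norm_cast
    _ = ∑ k ∈ Ico (2 ^ N : ℤ) (2 ^ N + s - 1), ‖exSeq k - exSeq (k + 1)‖ :=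
        sum_congr rfl fun k hk => by
          have := mem_Ico.1 hk
          exact (norm_exSeq_sub_succ hN this.1 (by omega)).symm
    _ ≤ ∑ k ∈ Icc (2 ^ N : ℤ) (2 * 2 ^ N), ‖exSeq k - exSeq (k + 1)‖ :=
        sum_le_sum_of_subset_of_nonneg
          (fun k hk => by have := mem_Ico.1 hk; exact mem_Icc.2 ⟨this.1, by omega⟩)
          fun _ _ _ => norm_nonneg _

lemma not_gmseq_exSeq : ¬ GMseq exSeq := by
  rintro ⟨C, hC, lam, hlam, hGM⟩
  obtain ⟨K, hK⟩ := exists_nat_gt (2 * C * lam ^ 2 + 1)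
  set N := (K + 2) ^ 2
  have hsqrt : Nat.sqrt N = K + 2 := Nat.sqrt_eq' _
  have hN : 4 ≤ N := show 2 ^ 2 ≤ (K + 2) ^ 2 from Nat.pow_le_pow_left (by omega) 2
  have hpow : (0 : ℝ) < 2 ^ N := by positivity
  have key : ((K : ℝ) + 1) * ((2 : ℝ) ^ N)⁻¹ ≤ 2 * C * lam ^ 2 * ((2 : ℝ) ^ N)⁻¹ :=
    calc ((K : ℝ) + 1) * ((2 : ℝ) ^ N)⁻¹ = ((Nat.sqrt N : ℝ) - 1) * ((2 : ℝ) ^ N)⁻¹ := by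
          rw [hsqrt]; push_cast; ring
      _ ≤ ∑ k ∈ Icc (2 ^ N : ℤ) (2 * 2 ^ N), ‖exSeq k - exSeq (k + 1)‖ :=
          sqrt_sub_one_mul_le_sum_norm_sub hN
      _ ≤ C / (2 ^ N : ℕ) *
            ∑ k ∈ Icc ⌈((2 ^ N : ℕ) : ℝ) / lam⌉ ⌊lam * (2 ^ N : ℕ)⌋, ‖exSeq k‖ := by
          simpa using hGM (2 ^ N) Nat.one_le_two_pow
      _ ≤ C / (2 ^ N : ℕ) * (2 * lam ^ 2) := by
          gcongr
          exact sum_norm_Icc_ceil_floor_le (fun k hk => norm_exSeq_le_two_div hk)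
            (by linarith) (by positivity)
      _ = 2 * C * lam ^ 2 * ((2 : ℝ) ^ N)⁻¹ := by push_cast; ring
  have := le_of_mul_le_mul_right key (inv_pos.2 hpow)
  linarith

/-- There is a sequence vanishing for `k ≤ 0` that belongs to `GM-bar` but
whose restriction to `k ≥ 1` does not belong to `GM`:
`GM-bar \ GM ≠ ∅`. -/
theorem GMbar_not_subset_GM : GMBar exSeq ∧ ¬ GMseq exSeq :=
  ⟨⟨64, by norm_num, gmBarWith_exSeq⟩, not_gmseq_exSeq⟩
end

section
/- Define a_k = (−1)^k 2^{−(7/4)n} for 2^n ≤ k < 2^{n+1} (n ≥ 0), b_k = (2/3)^n for 2^n ≤ k < 2^{n+1} (n ≥ 0), and c_k = a_k + i b_k for k > 0, c_k = 0 for k ≤ 0. Then: (i) {a_k}_{k≥1} ∉ GM; (ii) {b_k}_{k≥1} is nonincreasing (hence in GM); (iii) {c_k}_{k∈ℤ} ∈ GM-bar. -/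
open scoped ENNReal BigOperators

/-- `a_k = (-1)^k 2^{-(7/4)n}` for `2^n ≤ k < 2^{n+1}`, `n ≥ 0` (and `0` for `k ≤ 0`). -/
noncomputable def aRe : ℤ → ℝ := fun k =>
  if k ≤ 0 then 0
  else (-1 : ℝ) ^ k * ((2 : ℝ) ^ ((7 / 4 : ℝ) * (Nat.log 2 k.toNat : ℝ)))⁻¹

/-- `b_k = (2/3)^n` for `2^n ≤ k < 2^{n+1}`, `n ≥ 0` (and `0` for `k ≤ 0`). -/
noncomputable def bRe : ℤ → ℝ := fun k =>
  if k ≤ 0 then 0 else (2 / 3 : ℝ) ^ (Nat.log 2 k.toNat)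

/-- `c_k = a_k + i b_k` for `k > 0`, `c_k = 0` for `k ≤ 0`. -/
noncomputable def cSeq : ℤ → ℂ := fun k =>
  if k ≤ 0 then 0 else (aRe k : ℂ) + (bRe k : ℂ) * Complex.I

/-!
On the dyadic block `2^n ≤ k < 2^{n+1}` the real part `a` alternates in sign with amplitude
`ρ^n = 2^{-7n/4}`, so its variation there is about `2^{n+1} ρ^n`, a factor `2^n` more than the GM
bound `(C/n) ∑_{n/λ ≤ k ≤ λn} |a_k| ≈ ρ^n` allows. For `c` the same variation is at most
`2^n · 2ρ^n ≤ 2 (2/3)^n` since `2ρ ≤ 2/3`, and the imaginary part `b` only jumps at the end of the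
block, so `Θ_{n+1}(c) ≤ 3 (2/3)^n`. The imaginary part also keeps the averages large:
`|∑_{j ≤ 2^n} c_j| / (2^n + 1) ≥ (2/3)^n / 2`, so `Θ_n(c) ≤ 9 ĉ_{2^n}`.
-/

open Finset

lemma Int.natLog_toNat_eq {b n : ℕ} {k : ℤ} (h₁ : (b : ℤ) ^ n ≤ k)
    (h₂ : k < (b : ℤ) ^ (n + 1)) : Nat.log b k.toNat = n := by
  have hk : 0 ≤ k := le_trans (by positivity) h₁
  apply Nat.log_eq_of_pow_le_of_lt_pow <;> zify <;> rw [Int.toNat_of_nonneg hk] <;> assumption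

lemma Int.le_natLog_toNat {b n : ℕ} {k : ℤ} (hb : 1 < b) (h : (b : ℤ) ^ n ≤ k) :
    n ≤ Nat.log b k.toNat :=
  Nat.le_log_of_pow_le hb <| by
    zify; rwa [Int.toNat_of_nonneg (le_trans (by positivity) h)]

lemma Int.card_Ico_two_pow (n : ℕ) : #(Ico (2 ^ n : ℤ) (2 ^ (n + 1))) = 2 ^ n := by
  rw [Int.card_Ico, show (2 : ℤ) ^ (n + 1) - 2 ^ n = ((2 ^ n : ℕ) : ℤ) by push_cast; ring,
    Int.toNat_natCast]

lemma card_Icc_ceil_floor_le {x y : ℝ} (hx : 0 < x) (hy : 0 ≤ y) : (#(Icc ⌈x⌉ ⌊y⌋) : ℝ) ≤ y :=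
  calc (#(Icc ⌈x⌉ ⌊y⌋) : ℝ) ≤ #(Icc 1 ⌊y⌋) := by
        exact_mod_cast card_le_card (Icc_subset_Icc_left (Int.one_le_ceil_iff.mpr hx))
    _ ≤ y := by rw [Int.card_Icc, add_sub_cancel_right, Int.floor_toNat]; exact Nat.floor_le hy

lemma Theta_succ_of_eq_zero {a : ℤ → ℂ} (ha : ∀ m ≤ 0, a m = 0) (n : ℕ) :
    Theta a (n + 1) = ∑ m ∈ Ico (2 ^ n : ℤ) (2 ^ (n + 1)), ‖a m - a (m + 1)‖ := by
  have hpos : (0 : ℤ) < 2 ^ n := by positivity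
  have hdyad : dyadLo (n + 1) = 2 ^ n := if_neg n.succ_ne_zero
  unfold Theta
  rw [hdyad, ← sum_subset (s₁ := Ico (2 ^ n : ℤ) (2 ^ (n + 1)))]
  · refine sum_congr rfl fun m hm => ?_
    rw [symDiff, if_pos (by rw [mem_Ico] at hm; omega)]
  · intro m hm
    rw [mem_Ico] at hm
    rw [mem_filter, mem_Icc, abs_of_pos (by omega)]
    omega
  · intro m hm hm'
    rw [mem_filter, mem_Icc] at hm
    rw [mem_Ico] at hm'
    have hneg : m < 0 := by
      rcases abs_cases m with ⟨h, _⟩ | ⟨_, h⟩ <;> omega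
    rw [symDiff, if_neg (by omega), if_pos hneg, ha m hneg.le, ha (m - 1) (by omega), sub_zero,
      norm_zero]

lemma ofReal_norm_psum_div_le_hatAvg (a : ℤ → ℂ) {n : ℕ} {m : ℤ} (h₁ : 2 ^ n ≤ |m|)
    (h₂ : |m| < 2 ^ (n + 1)) :
    ENNReal.ofReal (‖psum a m‖ / (m.natAbs + 1)) ≤ hatAvg a n :=
  le_iSup₂ (f := fun (m : ℤ) (_ : (2 ^ n : ℤ) ≤ |m| ∧ |m| < 2 ^ (n + 1)) =>
    ENNReal.ofReal (‖psum a m‖ / ((m.natAbs : ℝ) + 1))) m ⟨h₁, h₂⟩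

lemma gmBar_of_Theta_le_hatAvg {a : ℤ → ℂ} {C : ℝ} (hC : 0 < C)
    (h : ∀ n, ENNReal.ofReal (Theta a n) ≤ ENNReal.ofReal C * hatAvg a n) : GMBar a := by
  refine ⟨C, hC, fun n => (h n).trans (mul_le_mul_right ?_ _)⟩
  calc hatAvg a n = min 1 ((2 : ℝ≥0∞) ^ ((n : ℝ) - n)) * hatAvg a n := by
        rw [sub_self, ENNReal.rpow_zero, min_self, one_mul]
    _ ≤ ⨆ k : ℕ, min 1 ((2 : ℝ≥0∞) ^ ((k : ℝ) - n)) * hatAvg a k :=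
        le_iSup (fun k : ℕ => min 1 ((2 : ℝ≥0∞) ^ ((k : ℝ) - n)) * hatAvg a k) n

local notation "ρ" => (2 : ℝ) ^ (-(7 / 4 : ℝ))

lemma rho_pos : 0 < ρ := by positivity

lemma rho_le_one : ρ ≤ 1 := Real.rpow_le_one_of_one_le_of_nonpos one_le_two (by norm_num)

lemma two_mul_rho_le : 2 * ρ ≤ 2 / 3 := by
  have h : (2 * ρ) ^ 4 = 1 / 8 := by
    rw [mul_pow, ← Real.rpow_natCast ρ, ← Real.rpow_mul zero_le_two]
    norm_num
  exact (pow_le_pow_iff_left₀ (by positivity) (by norm_num) four_ne_zero).mp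
    (by rw [h]; norm_num)

lemma aRe_of_nonpos {k : ℤ} (hk : k ≤ 0) : aRe k = 0 := if_pos hk

lemma aRe_of_pos {k : ℤ} (hk : 0 < k) : aRe k = (-1) ^ k * ρ ^ Nat.log 2 k.toNat := by
  rw [aRe, if_neg hk.not_ge, ← Real.rpow_natCast, ← Real.rpow_mul zero_le_two,
    ← Real.rpow_neg zero_le_two, neg_mul]

lemma abs_aRe_of_pos {k : ℤ} (hk : 0 < k) : |aRe k| = ρ ^ Nat.log 2 k.toNat := by
  rw [aRe_of_pos hk, abs_mul, abs_zpow, abs_neg, abs_one, one_zpow, one_mul,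
    abs_of_pos (pow_pos rho_pos _)]

lemma abs_aRe_le {n : ℕ} {k : ℤ} (h : 2 ^ n ≤ k) : |aRe k| ≤ ρ ^ n := by
  rw [abs_aRe_of_pos (lt_of_lt_of_le (by positivity) h)]
  exact pow_le_pow_of_le_one rho_pos.le rho_le_one
    (Int.le_natLog_toNat one_lt_two (by exact_mod_cast h))

lemma abs_aRe_sub_aRe_succ {n : ℕ} {k : ℤ} (h₁ : 2 ^ n ≤ k) (h₂ : k + 1 < 2 ^ (n + 1)) :
    |aRe k - aRe (k + 1)| = 2 * ρ ^ n := by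
  have hk : 0 < k := lt_of_lt_of_le (by positivity) h₁
  have hpow : (2 : ℤ) ^ (n + 1) = 2 * 2 ^ n := pow_succ' 2 n
  rw [aRe_of_pos hk, aRe_of_pos (by omega),
    Int.natLog_toNat_eq (b := 2) (by exact_mod_cast h₁) (by push_cast; omega),
    Int.natLog_toNat_eq (b := 2) (n := n) (by push_cast; omega) (by exact_mod_cast h₂),
    zpow_add_one₀ (by norm_num)]
  rw [show (-1 : ℝ) ^ k * ρ ^ n - (-1) ^ k * -1 * ρ ^ n = (-1) ^ k * (2 * ρ ^ n) by ring,
    abs_mul, abs_zpow, abs_neg, abs_one, one_zpow, one_mul, abs_of_pos (by positivity)]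

lemma bRe_of_nonpos {k : ℤ} (hk : k ≤ 0) : bRe k = 0 := if_pos hk

lemma bRe_of_pos {k : ℤ} (hk : 0 < k) : bRe k = (2 / 3) ^ Nat.log 2 k.toNat := by
  rw [bRe, if_neg hk.not_ge]

lemma bRe_nonneg (k : ℤ) : 0 ≤ bRe k := by
  unfold bRe; split <;> positivity

lemma bRe_succ_le {k : ℤ} (hk : 1 ≤ k) : bRe (k + 1) ≤ bRe k := by
  rw [bRe_of_pos hk, bRe_of_pos (by omega)]
  exact pow_le_pow_of_le_one (by norm_num) (by norm_num) (Nat.log_mono_right (by omega))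

lemma pow_le_bRe {n : ℕ} {k : ℤ} (h₁ : 1 ≤ k) (h₂ : k ≤ 2 ^ n) : (2 / 3) ^ n ≤ bRe k := by
  rw [bRe_of_pos h₁]
  refine pow_le_pow_of_le_one (by norm_num) (by norm_num) ?_
  calc Nat.log 2 k.toNat ≤ Nat.log 2 (2 ^ n) := Nat.log_mono_right (by zify; omega)
    _ = n := Nat.log_pow one_lt_two n

lemma bRe_of_mem_Ico {n : ℕ} {k : ℤ} (h₁ : 2 ^ n ≤ k) (h₂ : k < 2 ^ (n + 1)) :
    bRe k = (2 / 3) ^ n := by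
  rw [bRe_of_pos (lt_of_lt_of_le (by positivity) h₁),
    Int.natLog_toNat_eq (b := 2) (by exact_mod_cast h₁) (by exact_mod_cast h₂)]

lemma abs_bRe_sub_bRe_succ_le {n : ℕ} {k : ℤ} (h₁ : 2 ^ n ≤ k) (h₂ : k < 2 ^ (n + 1)) :
    |bRe k - bRe (k + 1)| ≤ if k = 2 ^ (n + 1) - 1 then (2 / 3) ^ n else 0 := by
  have hpow : (2 : ℤ) ^ (n + 1 + 1) = 2 * 2 ^ (n + 1) := pow_succ' 2 _
  split_ifs with hk
  · rw [bRe_of_mem_Ico h₁ h₂, bRe_of_mem_Ico (n := n + 1) (by omega) (by omega), pow_succ,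
      abs_of_nonneg (by nlinarith [pow_pos (by norm_num : (0 : ℝ) < 2 / 3) n])]
    nlinarith [pow_pos (by norm_num : (0 : ℝ) < 2 / 3) n]
  · rw [bRe_of_mem_Ico h₁ h₂, bRe_of_mem_Ico (n := n) (by omega) (by omega), sub_self, abs_zero]

lemma cSeq_eq (k : ℤ) : cSeq k = aRe k + bRe k * Complex.I := by
  rcases le_or_gt k 0 with hk | hk
  · simp [cSeq, aRe_of_nonpos hk, bRe_of_nonpos hk, hk]
  · exact if_neg hk.not_ge

lemma norm_cSeq_sub_le (j k : ℤ) :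
    ‖cSeq j - cSeq k‖ ≤ |aRe j - aRe k| + |bRe j - bRe k| := by
  refine (Complex.norm_le_abs_re_add_abs_im _).trans_eq ?_
  simp [cSeq_eq]

lemma le_sum_abs_aRe_sub_aRe_succ (N : ℕ) :
    (2 ^ N - 1) * (2 * ρ ^ N) ≤ ∑ k ∈ Icc (2 ^ N : ℤ) (2 * 2 ^ N), |aRe k - aRe (k + 1)| := by
  have hpos : (1 : ℤ) ≤ 2 ^ N := one_le_pow₀ one_le_two
  have hpow : (2 : ℤ) ^ (N + 1) = 2 * 2 ^ N := pow_succ' 2 N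
  have hcard : (#(Ico (2 ^ N : ℤ) (2 ^ (N + 1) - 1)) : ℝ) = 2 ^ N - 1 := by
    rw [Int.card_Ico, ← Int.cast_natCast, Int.toNat_of_nonneg (by omega)]
    push_cast; ring
  calc (2 ^ N - 1) * (2 * ρ ^ N)
      = ∑ k ∈ Ico (2 ^ N : ℤ) (2 ^ (N + 1) - 1), |aRe k - aRe (k + 1)| := by
        rw [sum_congr rfl fun k hk => abs_aRe_sub_aRe_succ (mem_Ico.mp hk).1 (by
          have := (mem_Ico.mp hk).2; omega), sum_const, nsmul_eq_mul, hcard]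
    _ ≤ ∑ k ∈ Icc (2 ^ N : ℤ) (2 * 2 ^ N), |aRe k - aRe (k + 1)| :=
        sum_le_sum_of_subset_of_nonneg
          (fun k hk => by rw [mem_Ico] at hk; rw [mem_Icc]; omega) fun _ _ _ => abs_nonneg _

lemma sum_abs_aRe_le {lam : ℝ} {L K : ℕ} (hlam : 0 < lam) (hL : lam < 2 ^ L) :
    ∑ k ∈ Icc ⌈(2 ^ (L + K) : ℝ) / lam⌉ ⌊lam * 2 ^ (L + K)⌋, |aRe k|
      ≤ lam * 2 ^ (L + K) * ρ ^ K := by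
  have hbound : ∀ k ∈ Icc ⌈(2 ^ (L + K) : ℝ) / lam⌉ ⌊lam * 2 ^ (L + K)⌋, |aRe k| ≤ ρ ^ K := by
    intro k hk
    have hk : (2 ^ K : ℝ) < k :=
      calc (2 ^ K : ℝ) = 2 ^ (L + K) / 2 ^ L := by rw [pow_add]; field_simp
        _ < 2 ^ (L + K) / lam := div_lt_div_of_pos_left (by positivity) hlam hL
        _ ≤ k := Int.ceil_le.mp (mem_Icc.mp hk).1
    exact abs_aRe_le (by exact_mod_cast hk.le)
  calc ∑ k ∈ Icc ⌈(2 ^ (L + K) : ℝ) / lam⌉ ⌊lam * 2 ^ (L + K)⌋, |aRe k|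
      ≤ #(Icc ⌈(2 ^ (L + K) : ℝ) / lam⌉ ⌊lam * 2 ^ (L + K)⌋) * ρ ^ K := by
        rw [← nsmul_eq_mul]; exact sum_le_card_nsmul _ _ _ hbound
    _ ≤ lam * 2 ^ (L + K) * ρ ^ K := by
        gcongr
        exact card_Icc_ceil_floor_le (by positivity) (by positivity)

lemma not_GMseq_aRe : ¬ GMseq (fun k => (aRe k : ℂ)) := by
  rintro ⟨C, hC, lam, hlam, H⟩
  obtain ⟨L, hL⟩ := pow_unbounded_of_one_lt lam one_lt_two
  obtain ⟨K, hK⟩ := pow_unbounded_of_one_lt (C * lam / (2 * ρ ^ L) + 1) one_lt_two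
  have hρL : 0 < ρ ^ L := pow_pos rho_pos L
  have hρK : 0 < ρ ^ K := pow_pos rho_pos K
  have h2K : (2 : ℝ) ^ K ≤ 2 ^ (L + K) := pow_le_pow_right₀ one_le_two (Nat.le_add_left K L)
  have hGM := H (2 ^ (L + K)) Nat.one_le_two_pow
  simp only [← Complex.ofReal_sub, Complex.norm_real, Real.norm_eq_abs, Nat.cast_pow,
    Nat.cast_ofNat] at hGM
  have hupper := sum_abs_aRe_le (K := K) (by linarith) hL
  have hlower := le_sum_abs_aRe_sub_aRe_succ (L + K)
  have hcombined : (2 ^ (L + K) - 1) * (2 * ρ ^ L) * ρ ^ K ≤ C * lam * ρ ^ K := by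
    calc (2 ^ (L + K) - 1) * (2 * ρ ^ L) * ρ ^ K = (2 ^ (L + K) - 1) * (2 * ρ ^ (L + K)) := by
          ring
      _ ≤ C / 2 ^ (L + K) * (lam * 2 ^ (L + K) * ρ ^ K) :=
          hlower.trans (hGM.trans (by gcongr))
      _ = C * lam * ρ ^ K := by field_simp
  have hK' : C * lam < (2 ^ K - 1) * (2 * ρ ^ L) :=
    (div_lt_iff₀ (by positivity)).mp (by linarith)
  nlinarith [le_of_mul_le_mul_right hcombined hρK]

lemma Theta_cSeq_zero_le : Theta cSeq 0 ≤ 9 / 2 := by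
  have hTheta : Theta cSeq 0 = ‖cSeq 0 - cSeq 1‖ := by
    simp [Theta, dyadLo, symDiff, cSeq_eq, aRe_of_nonpos, bRe_of_nonpos]
  have ha : |aRe 1| ≤ 1 := by simpa using abs_aRe_le (n := 0) (k := 1) le_rfl
  have hb : bRe 1 = 1 := by simpa using bRe_of_mem_Ico (n := 0) (k := 1) le_rfl one_lt_two
  rw [hTheta]
  refine (norm_cSeq_sub_le 0 1).trans ?_
  rw [aRe_of_nonpos le_rfl, bRe_of_nonpos le_rfl, hb, zero_sub, zero_sub, abs_neg, abs_neg]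
  norm_num
  linarith

lemma Theta_cSeq_succ_le (n : ℕ) : Theta cSeq (n + 1) ≤ 3 * (2 / 3) ^ n := by
  rw [Theta_succ_of_eq_zero (fun m hm => by rw [cSeq_eq, aRe_of_nonpos hm, bRe_of_nonpos hm]; simp)]
  have hpos : (0 : ℤ) < 2 ^ n := by positivity
  have hpow : (2 : ℤ) ^ (n + 1) = 2 * 2 ^ n := pow_succ' 2 n
  have hlast : (2 : ℤ) ^ (n + 1) - 1 ∈ Ico (2 ^ n : ℤ) (2 ^ (n + 1)) := by
    rw [mem_Ico]; constructor <;> omega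
  calc ∑ m ∈ Ico (2 ^ n : ℤ) (2 ^ (n + 1)), ‖cSeq m - cSeq (m + 1)‖
      ≤ ∑ m ∈ Ico (2 ^ n : ℤ) (2 ^ (n + 1)),
          (2 * ρ ^ n + if m = 2 ^ (n + 1) - 1 then (2 / 3) ^ n else 0) := by
        refine sum_le_sum fun m hm => (norm_cSeq_sub_le _ _).trans (add_le_add ?_ ?_)
        · rw [mem_Ico] at hm
          have h₁ := abs_aRe_le hm.1
          have h₂ := abs_aRe_le (n := n) (k := m + 1) (by omega)
          linarith [abs_sub (aRe m) (aRe (m + 1))]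
        · rw [mem_Ico] at hm
          exact abs_bRe_sub_bRe_succ_le hm.1 hm.2
    _ = 2 * (2 * ρ) ^ n + (2 / 3) ^ n := by
        rw [sum_add_distrib, sum_const, Int.card_Ico_two_pow, sum_ite_eq' _ _ _, if_pos hlast,
          nsmul_eq_mul, mul_pow]
        push_cast; ring
    _ ≤ 3 * (2 / 3) ^ n := by
        have := pow_le_pow_left₀ (by positivity) two_mul_rho_le n
        linarith

lemma Theta_cSeq_le (n : ℕ) : Theta cSeq n ≤ 9 / 2 * (2 / 3) ^ n := by
  cases n with
  | zero => simpa using Theta_cSeq_zero_le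
  | succ n =>
    calc Theta cSeq (n + 1) ≤ 3 * (2 / 3) ^ n := Theta_cSeq_succ_le n
      _ = 9 / 2 * (2 / 3) ^ (n + 1) := by ring

lemma ofReal_le_hatAvg_cSeq (n : ℕ) : ENNReal.ofReal ((2 / 3) ^ n / 2) ≤ hatAvg cSeq n := by
  have hpos : (0 : ℤ) < 2 ^ n := by positivity
  have hnatAbs : (((2 : ℤ) ^ n).natAbs : ℝ) = 2 ^ n := by
    rw [Int.natAbs_pow]; push_cast; rfl
  have hcard : #(Icc (1 : ℤ) (2 ^ n)) = 2 ^ n := by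
    rw [Int.card_Icc, add_sub_cancel_right, show (2 : ℤ) ^ n = ((2 ^ n : ℕ) : ℤ) by push_cast; rfl,
      Int.toNat_natCast]
  have hsum : 2 ^ n * (2 / 3) ^ n ≤ ‖psum cSeq (2 ^ n)‖ :=
    calc (2 : ℝ) ^ n * (2 / 3) ^ n = ∑ j ∈ Icc (1 : ℤ) (2 ^ n), (2 / 3 : ℝ) ^ n := by
          rw [sum_const, hcard, nsmul_eq_mul]; push_cast; rfl
      _ ≤ ∑ j ∈ Icc (1 : ℤ) (2 ^ n), bRe j :=
          sum_le_sum fun j hj => pow_le_bRe (mem_Icc.mp hj).1 (mem_Icc.mp hj).2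
      _ ≤ ∑ j ∈ Icc (0 : ℤ) (2 ^ n), bRe j :=
          sum_le_sum_of_subset_of_nonneg (Icc_subset_Icc_left zero_le_one)
            fun j _ _ => bRe_nonneg j
      _ = (psum cSeq (2 ^ n)).im := by
          simp [psum, hpos.le, Complex.im_sum, cSeq_eq]
      _ ≤ ‖psum cSeq (2 ^ n)‖ := Complex.im_le_norm _
  refine le_trans (ENNReal.ofReal_le_ofReal ?_)
    (ofReal_norm_psum_div_le_hatAvg cSeq (m := 2 ^ n) (abs_of_pos hpos).ge (by
      rw [abs_of_pos hpos, pow_succ]; omega))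
  rw [hnatAbs, le_div_iff₀ (by positivity)]
  have : (1 : ℝ) ≤ 2 ^ n := one_le_pow₀ one_le_two
  nlinarith [pow_pos (by norm_num : (0 : ℝ) < 2 / 3) n]

lemma cSeq_mem_GMBar : GMBar cSeq := by
  refine gmBar_of_Theta_le_hatAvg (C := 9) (by norm_num) fun n => ?_
  calc ENNReal.ofReal (Theta cSeq n) ≤ ENNReal.ofReal (9 * ((2 / 3) ^ n / 2)) :=
        ENNReal.ofReal_le_ofReal ((Theta_cSeq_le n).trans_eq (by ring))
    _ ≤ ENNReal.ofReal 9 * hatAvg cSeq n := by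
        rw [ENNReal.ofReal_mul (by norm_num)]
        exact mul_le_mul_right (ofReal_le_hatAvg_cSeq n) _

/-- Compensatory effect: `{a_k}_{k≥1} ∉ GM`, `{b_k}_{k≥1}` is nonincreasing
(hence in `GM`), yet `{c_k}_{k∈ℤ} = {a_k + i b_k} ∈ GM-bar`. -/
theorem compensatory_example :
    ¬ GMseq (fun k => (aRe k : ℂ)) ∧
    (∀ k : ℤ, 1 ≤ k → bRe (k + 1) ≤ bRe k) ∧
    GMBar cSeq :=
  ⟨not_GMseq_aRe, fun _ hk => bRe_succ_le hk, cSeq_mem_GMBar⟩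
end
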